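/- Let V(x,y) := (0, (1 − cos x) sin y), X_1(x,y) := (1, 0), X_2(x,y) := (0, η(y)) on ℝ², where η is C^∞, 2π-periodic, and η(y) = 0 for y ∈ [π/4, 3π/4] ∪ [5π/4, 7π/4]. Then the control system ż = V(z) + u_1(t) X_1(z) + u_2(t) X_2(z) is not controllable on the 2-torus: there exist no T > 0, piecewise continuous controls u_1, u_2 : [0,T] → ℝ, and controlled trajectory z : [0,T] → ℝ² with z(0) = (0, π) and z(T) ∈ 2πℤ² (i.e. the point (0,0) of the torus is not attainable from the point (0,π)). -/

import Mathlib

open Real Set Filter Topology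

noncomputable section

/-- Euclidean space `ℝ^d`. -/
abbrev Ed (d : ℕ) : Type := EuclideanSpace ℝ (Fin d)

/-- The vector `2πk ∈ 2πℤ^d`. -/
def twoPiVec (d : ℕ) (k : Fin d → ℤ) : Ed d := WithLp.toLp 2 (fun i => 2 * π * (k i))

/-- A map `ℝ^d → ℝ^d` is `2π`-periodic if it is invariant under translations by `2πℤ^d`. -/
def IsPeriodicVF {d : ℕ} (V : Ed d → Ed d) : Prop :=
  ∀ (x : Ed d) (k : Fin d → ℤ), V (x + twoPiVec d k) = V x

/-- The torus distance `dist_T(p,q) = inf { ‖p - q - 2πk‖ : k ∈ ℤ^d }`. -/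
def distT {d : ℕ} (p q : Ed d) : ℝ := ⨅ k : Fin d → ℤ, ‖p - q - twoPiVec d k‖

/-- `φ` is the (complete) flow of the vector field `V`. -/
def IsFlowOf {d : ℕ} (V : Ed d → Ed d) (φ : ℝ → Ed d → Ed d) : Prop :=
  (∀ x, φ 0 x = x) ∧ ∀ (t : ℝ) (x : Ed d), HasDerivAt (fun s => φ s x) (V (φ t x)) t

/-- A `δ`-solution of `ẋ = V(x)` on `[a,b]`: a continuous, piecewise `C¹` curve
(differentiable off a finite set) with `‖ẋ(t) - V(x(t))‖ ≤ δ` wherever differentiable. -/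
def IsDeltaSol {d : ℕ} (V : Ed d → Ed d) (δ a b : ℝ) (x : ℝ → Ed d) : Prop :=
  ContinuousOn x (Icc a b) ∧
  ∃ F : Finset ℝ, ∀ t ∈ Icc a b, t ∉ F →
    ∃ v : Ed d, HasDerivAt x v t ∧ ‖v - V (x t)‖ ≤ δ

/-- `p` is nonwandering for the flow `φ` on the torus. -/
def NonwanderingPt {d : ℕ} (φ : ℝ → Ed d → Ed d) (p : Ed d) : Prop :=
  ∀ ε > 0, ∃ T, 1 ≤ T ∧ ∃ p' : Ed d, distT p' p < ε ∧ distT (φ T p') p < ε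

/-- `p` is chain recurrent for `ẋ = V(x)` on the torus. -/
def ChainRecurrentPt {d : ℕ} (V : Ed d → Ed d) (p : Ed d) : Prop :=
  ∀ δ > 0, ∃ T, 1 ≤ T ∧ ∃ x : ℝ → Ed d,
    IsDeltaSol V δ 0 T x ∧ x 0 = p ∧ ∃ k, x T - p = twoPiVec d k

/-- A set is invariant if it is invariant under the flow and under translations by `2πℤ^d`. -/
def TorusInvariant {d : ℕ} (φ : ℝ → Ed d → Ed d) (S : Set (Ed d)) : Prop :=
  (∀ x ∈ S, ∀ t, φ t x ∈ S) ∧ ∀ x ∈ S, ∀ k, x + twoPiVec d k ∈ S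

/-- The orbit of `p` together with all its `2πℤ^d`-translates. -/
def torusOrbit {d : ℕ} (φ : ℝ → Ed d → Ed d) (p : Ed d) : Set (Ed d) :=
  {y | ∃ t k, y = φ t p + twoPiVec d k}

/-- `p` is minimal: the closure of its (torus) orbit contains no nonempty proper closed
invariant subset. -/
def IsMinimalPt {d : ℕ} (φ : ℝ → Ed d → Ed d) (p : Ed d) : Prop :=
  ∀ S ⊆ closure (torusOrbit φ p), IsClosed S → TorusInvariant φ S →
    S.Nonempty → S = closure (torusOrbit φ p)

/-- `Min_V`: the closure of the set of all minimal points. -/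
def MinV {d : ℕ} (φ : ℝ → Ed d → Ed d) : Set (Ed d) := closure {p | IsMinimalPt φ p}

/-- The Lie bracket `[X,Y](p) = DY(p) X(p) - DX(p) Y(p)` of vector fields on `ℝ^d`. -/
def vfBracket {d : ℕ} (X Y : Ed d → Ed d) : Ed d → Ed d :=
  fun p => fderiv ℝ Y p (X p) - fderiv ℝ X p (Y p)

/-- `ℬ(𝒜)`: the smallest family of vector fields containing `𝒜` and closed under brackets. -/
inductive LieGen {d : ℕ} (A : Set (Ed d → Ed d)) : (Ed d → Ed d) → Prop
  | base : ∀ X ∈ A, LieGen A X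
  | bracket : ∀ X Y, LieGen A X → LieGen A Y → LieGen A (vfBracket X Y)

/-- The family `A` satisfies the Hörmander condition at `p`. -/
def Hormander {d : ℕ} (A : Set (Ed d → Ed d)) (p : Ed d) : Prop :=
  Submodule.span ℝ {v : Ed d | ∃ W, LieGen A W ∧ W p = v} = ⊤

/-- A controlled trajectory of `ẋ = V(x) + Σⱼ uⱼ(t) Xⱼ(x)` on `[0,T]` with piecewise
continuous controls `u`. -/
def IsCtrlTraj {d m : ℕ} (V : Ed d → Ed d) (X : Fin m → Ed d → Ed d) (T : ℝ)
    (u : Fin m → ℝ → ℝ) (x : ℝ → Ed d) : Prop :=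
  ContinuousOn x (Icc 0 T) ∧
  ∃ F : Finset ℝ,
    (∀ j, ContinuousOn (u j) (Icc 0 T \ F)) ∧
    ∀ t ∈ Icc 0 T, t ∉ F →
      HasDerivAt x (V (x t) + ∑ j, u j t • X j (x t)) t

/-- The attainable set `A_{ε,p}` on the torus. -/
def Attainable {d m : ℕ} (V : Ed d → Ed d) (X : Fin m → Ed d → Ed d) (ε : ℝ) (p : Ed d) :
    Set (Ed d) :=
  {q | ∃ θ > 0, ∃ u x, IsCtrlTraj V X θ u x ∧ (∀ j t, |u j t| ≤ ε) ∧
    x 0 = p ∧ ∃ k, x θ - q = twoPiVec d k}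

/-- The drift `V(x,y) = (0, (1 - cos x) sin y)` on `ℝ²`. -/
def Vex : Ed 2 → Ed 2 := fun p => WithLp.toLp 2 ![0, (1 - cos (p 0)) * sin (p 1)]

/-- The vector field `X₁(x,y) = (1, 0)` on `ℝ²`. -/
def X1ex : Ed 2 → Ed 2 := fun _ => WithLp.toLp 2 (![1, 0] : Fin 2 → ℝ)

/-- The vector field `X₂(x,y) = (0, η(y))` on `ℝ²`. -/
def X2ex (η : ℝ → ℝ) : Ed 2 → Ed 2 := fun p => WithLp.toLp 2 ![0, η (p 1)]


/-- If `f` is continuous on `[a,b]` and has nonpositive derivative off a finite set,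
then `f b ≤ f a`. -/
lemma decr_off_finite (F : Finset ℝ) : ∀ (f : ℝ → ℝ) (a b : ℝ), a ≤ b →
    ContinuousOn f (Icc a b) →
    (∀ t ∈ Ioo a b, t ∉ F → ∃ v ≤ (0:ℝ), HasDerivAt f v t) → f b ≤ f a := by
  induction F using Finset.induction_on with
  | empty =>
    intro f a b hab hc hd
    have hanti : AntitoneOn f (Icc a b) := by
      apply antitoneOn_of_deriv_nonpos (convex_Icc a b) hc
      · intro x hx
        rw [interior_Icc] at hx
        obtain ⟨v, _, hv⟩ := hd x hx (Finset.notMem_empty x)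
        exact hv.differentiableAt.differentiableWithinAt
      · intro x hx
        rw [interior_Icc] at hx
        obtain ⟨v, hv0, hv⟩ := hd x hx (Finset.notMem_empty x)
        rw [hv.deriv]; exact hv0
    exact hanti (left_mem_Icc.2 hab) (right_mem_Icc.2 hab) hab
  | @insert c F hcF ih =>
    intro f a b hab hc hd
    by_cases hcab : c ∈ Ioo a b
    · have h1 : f c ≤ f a := by
        refine ih f a c hcab.1.le (hc.mono (Icc_subset_Icc le_rfl hcab.2.le)) ?_
        intro t ht htF
        refine hd t ⟨ht.1, ht.2.trans hcab.2⟩ ?_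
        simp only [Finset.mem_insert, not_or]
        exact ⟨ne_of_lt ht.2, htF⟩
      have h2 : f b ≤ f c := by
        refine ih f c b hcab.2.le (hc.mono (Icc_subset_Icc hcab.1.le le_rfl)) ?_
        intro t ht htF
        refine hd t ⟨hcab.1.trans ht.1, ht.2⟩ ?_
        simp only [Finset.mem_insert, not_or]
        exact ⟨ne_of_gt ht.1, htF⟩
      exact h2.trans h1
    · refine ih f a b hab hc ?_
      intro t ht htF
      refine hd t ht ?_
      simp only [Finset.mem_insert, not_or]
      exact ⟨fun h => hcab (h ▸ ht), htF⟩

/-- Barrier lemma: if `f 0 < b` and the derivative is nonpositive whenever `f ∈ [b,c]`,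
then `f` stays (strictly) below `c` on `[0,T]`. -/
lemma barrier (f : ℝ → ℝ) (T b c : ℝ) (hbc : b < c)
    (hf : ContinuousOn f (Icc 0 T)) (F : Finset ℝ)
    (hd : ∀ t ∈ Icc 0 T, t ∉ F → b ≤ f t → f t ≤ c → ∃ v ≤ (0:ℝ), HasDerivAt f v t)
    (h0 : f 0 < b) : ∀ t ∈ Icc 0 T, f t < c := by
  by_contra h
  push_neg at h
  obtain ⟨t₁, ht₁, hft₁⟩ := h
  have hT : (0:ℝ) ≤ T := ht₁.1.trans ht₁.2
  have h0T : (0:ℝ) ∈ Icc (0:ℝ) T := ⟨le_rfl, hT⟩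
  set A : Set ℝ := Icc 0 T ∩ f ⁻¹' (Ici c) with hAdef
  have hAclosed : IsClosed A := hf.preimage_isClosed_of_isClosed isClosed_Icc isClosed_Ici
  have hAne : A.Nonempty := ⟨t₁, ht₁, hft₁⟩
  have hAbdd : BddBelow A := ⟨0, fun x hx => hx.1.1⟩
  set s := sInf A with hsdef
  have hsA : s ∈ A := hAclosed.csInf_mem hAne hAbdd
  have hsIcc : s ∈ Icc 0 T := hsA.1
  have hfs : c ≤ f s := hsA.2
  set B : Set ℝ := Icc 0 s ∩ f ⁻¹' (Iic b) with hBdef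
  have hBclosed : IsClosed B :=
    (hf.mono (Icc_subset_Icc le_rfl hsIcc.2)).preimage_isClosed_of_isClosed isClosed_Icc
      isClosed_Iic
  have hBne : B.Nonempty := ⟨0, ⟨le_rfl, hsIcc.1⟩, h0.le⟩
  have hBbdd : BddAbove B := ⟨s, fun x hx => hx.1.2⟩
  set r := sSup B with hrdef
  have hrB : r ∈ B := hBclosed.csSup_mem hBne hBbdd
  have hfr : f r ≤ b := hrB.2
  have hrs : r ≤ s := hrB.1.2
  have hr0 : 0 ≤ r := hrB.1.1
  have hrslt : r < s := by
    rcases lt_or_eq_of_le hrs with h | h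
    · exact h
    · exfalso; rw [h] at hfr; linarith
  -- between r and s, f stays in (b, c)
  have hmid : ∀ t ∈ Ioo r s, b < f t ∧ f t < c := by
    intro t ht
    have htIcc : t ∈ Icc 0 T := ⟨hr0.trans ht.1.le, ht.2.le.trans hsIcc.2⟩
    constructor
    · by_contra hb
      push_neg at hb
      exact (notMem_of_csSup_lt ht.1 hBbdd) ⟨⟨htIcc.1, ht.2.le⟩, hb⟩
    · by_contra hcc
      push_neg at hcc
      exact (notMem_of_lt_csInf ht.2 hAbdd) ⟨htIcc, hcc⟩
  have hdecr : f s ≤ f r := by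
    refine decr_off_finite F f r s hrs
      (hf.mono (Icc_subset_Icc hr0 hsIcc.2)) ?_
    intro t ht htF
    obtain ⟨hb, hc2⟩ := hmid t ht
    exact hd t ⟨hr0.trans ht.1.le, ht.2.le.trans hsIcc.2⟩ htF hb.le hc2.le
  linarith

/-- With `η` vanishing on `[π/4,3π/4] ∪ [5π/4,7π/4]`, the control system
`ż = V(z) + u₁ X₁(z) + u₂ X₂(z)` is not controllable on the 2-torus: the point `(0,0)` of the
torus is not attainable from `(0,π)`. -/
theorem not_controllable_example
    (η : ℝ → ℝ) (hη : ContDiff ℝ (⊤ : ℕ∞) η) (hηper : ∀ y, η (y + 2 * π) = η y)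
    (hηzero : ∀ y ∈ Icc (π / 4) (3 * π / 4) ∪ Icc (5 * π / 4) (7 * π / 4), η y = 0) :
    ¬ ∃ T > 0, ∃ (u : Fin 2 → ℝ → ℝ) (z : ℝ → Ed 2),
        IsCtrlTraj Vex ![X1ex, X2ex η] T u z ∧
        z 0 = (WithLp.toLp 2 ![0, π] : Ed 2) ∧ ∃ k, z T = twoPiVec 2 k := by
  rintro ⟨T, hT, u, z, ⟨hzc, F, huc, hzd⟩, hz0, k, hzT⟩
  have hpi := Real.pi_pos
  -- the second coordinate
  have hfc : ContinuousOn (fun t => z t 1) (Icc 0 T) :=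
    (EuclideanSpace.proj (1 : Fin 2)).continuous.comp_continuousOn hzc
  have key : ∀ t ∈ Icc 0 T, t ∉ F →
      HasDerivAt (fun s => z s 1)
        ((1 - cos (z t 0)) * sin (z t 1) + u 1 t * η (z t 1)) t := by
    intro t ht htF
    have h := hzd t ht htF
    have h1 := ((EuclideanSpace.proj (1 : Fin 2)).hasFDerivAt.comp_hasDerivAt t h)
    have hw : (EuclideanSpace.proj (1 : Fin 2))
        (Vex (z t) + ∑ j, u j t • (![X1ex, X2ex η] : Fin 2 → Ed 2 → Ed 2) j (z t)) =
        (1 - cos (z t 0)) * sin (z t 1) + u 1 t * η (z t 1) := by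
      simp [Vex, X1ex, X2ex, Fin.sum_univ_two, PiLp.add_apply, PiLp.smul_apply, smul_eq_mul]
    rw [hw] at h1
    exact h1
  have hf0 : z 0 1 = π := by rw [hz0]; simp
  -- upper barrier : y stays below 7π/4
  have hup : ∀ t ∈ Icc 0 T, z t 1 < 7 * π / 4 := by
    refine barrier (fun t => z t 1) T (5 * π / 4) (7 * π / 4) (by linarith) hfc F ?_
      (by show z 0 1 < _; rw [hf0]; linarith)
    intro t ht htF hb hc
    have hη0 : η (z t 1) = 0 := hηzero _ (Or.inr ⟨hb, hc⟩)
    refine ⟨(1 - cos (z t 0)) * sin (z t 1) + u 1 t * η (z t 1), ?_, key t ht htF⟩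
    have hsin : sin (z t 1) ≤ 0 := by
      have h1 : 0 ≤ sin (z t 1 - π) :=
        Real.sin_nonneg_of_nonneg_of_le_pi (by linarith) (by linarith)
      rw [Real.sin_sub_pi] at h1
      linarith
    have hcos : cos (z t 0) ≤ 1 := Real.cos_le_one _
    rw [hη0]
    nlinarith
  -- lower barrier : y stays above π/4
  have hdown : ∀ t ∈ Icc 0 T, -(z t 1) < -(π / 4) := by
    refine barrier (fun t => -(z t 1)) T (-(3 * π / 4)) (-(π / 4)) (by linarith)
      hfc.neg F ?_ (by show -(z 0 1) < _; rw [hf0]; linarith)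
    intro t ht htF hb hc
    have hmem : z t 1 ∈ Icc (π / 4) (3 * π / 4) := ⟨by linarith, by linarith⟩
    have hη0 : η (z t 1) = 0 := hηzero _ (Or.inl hmem)
    refine ⟨-((1 - cos (z t 0)) * sin (z t 1) + u 1 t * η (z t 1)), ?_, (key t ht htF).neg⟩
    have hsin : 0 ≤ sin (z t 1) :=
      Real.sin_nonneg_of_nonneg_of_le_pi (by linarith) (by linarith)
    have hcos : cos (z t 0) ≤ 1 := Real.cos_le_one _
    rw [hη0]
    nlinarith
  have hTmem : T ∈ Icc (0:ℝ) T := ⟨hT.le, le_rfl⟩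
  have h1 := hup T hTmem
  have h2 := hdown T hTmem
  have hzT1 : z T 1 = 2 * π * (k 1 : ℝ) := by rw [hzT]; rfl
  rw [hzT1] at h1 h2
  rcases le_or_gt (k 1) 0 with hk | hk
  · have : ((k 1 : ℝ)) ≤ 0 := by exact_mod_cast hk
    nlinarith
  · have : (1:ℝ) ≤ (k 1 : ℝ) := by exact_mod_cast hk
    nlinarith
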